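/- Let Ω ⊂ R^2 be a bounded measurable set and let u: Ω → R be integrable with ∫_Ω |u| = m > 0. Suppose v: Ω → R satisfies v(x) ≤ (1/(2πd)) ∫_Ω ln(1/|x−y|)·|u(y)| dy + K m for all x ∈ Ω, where d, K > 0. If 0 < Λ < 4πd/m, then ∫_Ω exp(Λ v(x)) dx ≤ e^{ΛKm} · ∫_Ω (∫_Ω |x−y|^{−Λm/(2πd)} dx) · (|u(y)|/m) dy. -/

import Mathlib

/-!
Put `c = Λm/(2πd) ∈ (0, 2)` and `w = |u|/m`, a probability density on `Ω`. The hypothesis on `v`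
reads `Λ v(x) ≤ ΛKm + ∫ c log(1/|x-y|) w(y) dy`, so Jensen's inequality for `exp` against `w dy`
bounds `exp(Λ v(x))` by `e^{ΛKm} ∫ |x-y|^{-c} w(y) dy`. Since `c < 2`, the kernel `|x-y|^{-c}` is
locally integrable in the plane; this makes `(x, y) ↦ |x-y|^{-c} w(y)` integrable on `Ω × Ω`, which
justifies Jensen for almost every `x` and lets Fubini exchange the two integrals.
-/

open MeasureTheory Metric Set Real

theorem Real.abs_log_le_self_add_rpow_neg_div {x c : ℝ} (hx : 0 ≤ x) (hc : 0 < c) :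
    |log x| ≤ x + x ^ (-c) / c := by
  have hneg : -log x ≤ x ^ (-c) / c := by
    simpa [← log_inv, inv_rpow hx, ← rpow_neg hx] using log_le_rpow_div (inv_nonneg.2 hx) hc
  have hrpow : 0 ≤ x ^ (-c) / c := by positivity
  exact abs_le.2 ⟨by linarith, by linarith [log_le_self hx]⟩

theorem ConvexOn.map_integral_mul_le {α : Type*} [MeasurableSpace α] {ν : Measure α}
    {g : ℝ → ℝ} (hg : ConvexOn ℝ univ g) (hgc : Continuous g) {w φ : α → ℝ}
    (hw0 : 0 ≤ᵐ[ν] w) (hw : Integrable w ν) (hw1 : ∫ a, w a ∂ν = 1)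
    (hφ : Integrable (fun a => w a * φ a) ν) (hgφ : Integrable (fun a => w a * g (φ a)) ν) :
    g (∫ a, w a * φ a ∂ν) ≤ ∫ a, w a * g (φ a) ∂ν := by
  set μ := ν.withDensity fun a => ENNReal.ofReal (w a)
  have hdens : AEMeasurable (fun a => ENNReal.ofReal (w a)) ν := hw.aemeasurable.ennreal_ofReal
  have hfin : ∀ᵐ a ∂ν, ENNReal.ofReal (w a) < ⊤ := ae_of_all _ fun _ => ENNReal.ofReal_lt_top
  have hsmul : ∀ f : α → ℝ,
      (fun a => (ENNReal.ofReal (w a)).toReal • f a) =ᵐ[ν] fun a => w a * f a := fun f =>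
    hw0.mono fun a ha => by simp [ENNReal.toReal_ofReal ha]
  have hμ_integral : ∀ f : α → ℝ, ∫ a, f a ∂μ = ∫ a, w a * f a ∂ν := fun f => by
    rw [integral_withDensity_eq_integral_toReal_smul₀ hdens hfin, integral_congr_ae (hsmul f)]
  have hμ_integrable : ∀ f : α → ℝ, Integrable f μ ↔ Integrable (fun a => w a * f a) ν := by
    intro f
    rw [integrable_withDensity_iff_integrable_smul₀' hdens hfin, integrable_congr (hsmul f)]
  have : IsProbabilityMeasure μ := ⟨by
    rw [withDensity_apply _ MeasurableSet.univ, Measure.restrict_univ,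
      ← ofReal_integral_eq_lintegral_ofReal hw hw0, hw1, ENNReal.ofReal_one]⟩
  rw [← hμ_integral, ← hμ_integral fun a => g (φ a)]
  exact hg.map_integral_le hgc.continuousOn isClosed_univ (ae_of_all _ fun _ => mem_univ _)
    ((hμ_integrable φ).2 hφ) ((hμ_integrable _).2 hgφ)

theorem exp_mul_integral_log_inv_le_integral_rpow_neg {α : Type*} [MeasurableSpace α]
    {ν : Measure α} {r w : α → ℝ} {c D : ℝ} (hc : 0 < c) (hr : AEMeasurable r ν)
    (hr0 : ∀ᵐ a ∂ν, 0 < r a) (hrD : ∀ᵐ a ∂ν, r a ≤ D)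
    (hw0 : 0 ≤ᵐ[ν] w) (hw : Integrable w ν) (hw1 : ∫ a, w a ∂ν = 1)
    (hrw : Integrable (fun a => r a ^ (-c) * w a) ν) :
    exp (c * ∫ a, log (1 / r a) * w a ∂ν) ≤ ∫ a, r a ^ (-c) * w a ∂ν := by
  have hexp : ∀ᵐ a ∂ν, w a * exp (c * log (1 / r a)) = r a ^ (-c) * w a :=
    hr0.mono fun a ha => by rw [rpow_def_of_pos ha, one_div, log_inv]; ring_nf
  have hlog : Integrable (fun a => w a * (c * log (1 / r a))) ν := by
    refine Integrable.mono' ((hw.const_mul (c * D)).add hrw)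
      (hw.1.mul (by fun_prop : AEMeasurable (fun a => c * log (1 / r a)) ν).aestronglyMeasurable) ?_
    filter_upwards [hr0, hrD, hw0] with a ha haD haw
    have hbound := abs_log_le_self_add_rpow_neg_div ha.le hc
    calc ‖w a * (c * log (1 / r a))‖ = w a * (c * |log (r a)|) := by
          rw [one_div, log_inv, norm_mul, norm_mul, norm_neg, norm_of_nonneg haw,
            norm_of_nonneg hc.le, Real.norm_eq_abs]
      _ ≤ w a * (c * (D + r a ^ (-c) / c)) := by gcongr; linarith
      _ = c * D * w a + r a ^ (-c) * w a := by field_simp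
  have hjensen := convexOn_exp.map_integral_mul_le continuous_exp hw0 hw hw1 hlog
    ((integrable_congr hexp).2 hrw)
  rw [integral_congr_ae hexp] at hjensen
  convert hjensen using 2
  rw [← integral_const_mul]
  congr 1 with a
  ring

theorem integrable_rpow_neg_norm_sub_mul_restrict_prod {E : Type*} [NormedAddCommGroup E]
    [NormedSpace ℝ E] [FiniteDimensional ℝ E] [MeasurableSpace E] [BorelSpace E]
    {μ : Measure E} [μ.IsAddHaarMeasure] (hdim : 1 ≤ Module.finrank ℝ E) {s : Set E}
    (hs : Bornology.IsBounded s) (hsm : MeasurableSet s) {c : ℝ} (hc : c < Module.finrank ℝ E)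
    {w : E → ℝ} (hw : IntegrableOn w s μ) :
    Integrable (fun p : E × E => ‖p.1 - p.2‖ ^ (-c) * w p.2)
      ((μ.restrict s).prod (μ.restrict s)) := by
  set k := (closedBall (0 : E) (diam s)).indicator fun x => ‖x‖ ^ (-c)
  have hloc : LocallyIntegrable (fun x : E => ‖x‖ ^ (-c)) μ :=
    locallyIntegrable_of_norm_le_rpow (C := 1) hdim hc
      (ae_of_all _ fun x => by simp [abs_of_nonneg (rpow_nonneg (norm_nonneg x) _)])
      (continuous_norm.measurable.pow_const _).aestronglyMeasurable
  have hk : Integrable k μ :=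
    (hloc.integrableOn_isCompact (isCompact_closedBall 0 _)).integrable_indicator
      measurableSet_closedBall
  have hconv := (hw.integrable_indicator hsm).convolution_integrand
    (ContinuousLinearMap.mul ℝ ℝ) hk
  rw [Measure.prod_restrict]
  refine (hconv.restrict (s := s ×ˢ s)).congr ?_
  filter_upwards [ae_restrict_mem (hsm.prod hsm)] with p ⟨hp1, hp2⟩
  have hdist : p.1 - p.2 ∈ closedBall (0 : E) (diam s) := by
    simpa [dist_eq_norm] using dist_le_diam_of_mem hs hp1 hp2
  simp [k, indicator_of_mem hp2, indicator_of_mem hdist, mul_comm]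

theorem exp_integral_bound_general
    (Ω : Set (EuclideanSpace ℝ (Fin 2))) (hΩb : Bornology.IsBounded Ω)
    (hΩm : MeasurableSet Ω)
    (u v : EuclideanSpace ℝ (Fin 2) → ℝ)
    (m d K Λ : ℝ) (hm : 0 < m) (hd : 0 < d)
    (hu : MeasureTheory.IntegrableOn u Ω)
    (hum : ∫ y in Ω, |u y| = m)
    (hv : ∀ x ∈ Ω, v x ≤
      (1 / (2 * Real.pi * d)) * (∫ y in Ω, Real.log (1 / ‖x - y‖) * |u y|) + K * m)
    (hΛ : 0 < Λ) (hΛ2 : Λ < 4 * Real.pi * d / m) :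
    ∫ x in Ω, Real.exp (Λ * v x) ≤
      Real.exp (Λ * K * m) *
        ∫ y in Ω, (∫ x in Ω, ‖x - y‖ ^ (-(Λ * m / (2 * Real.pi * d)))) * (|u y| / m) := by
  set c := Λ * m / (2 * π * d)
  have hc0 : 0 < c := by positivity
  have hc2 : c < 2 := by
    rw [div_lt_iff₀ (by positivity)]
    rw [lt_div_iff₀ hm] at hΛ2
    linarith
  set w := fun y => |u y| / m
  have hw : IntegrableOn w Ω := hu.abs.div_const m
  have hw1 : ∫ y in Ω, w y = 1 := by rw [integral_div, hum, div_self hm.ne']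
  have hF := integrable_rpow_neg_norm_sub_mul_restrict_prod (by simp) hΩb hΩm
    (by simpa using hc2) hw
  have hpointwise : ∀ᵐ x ∂volume.restrict Ω,
      exp (Λ * v x) ≤ exp (Λ * K * m) * ∫ y in Ω, ‖x - y‖ ^ (-c) * w y := by
    filter_upwards [hF.prod_right_ae, ae_restrict_mem hΩm] with x hx hxΩ
    have hr0 : ∀ᵐ y ∂volume.restrict Ω, 0 < ‖x - y‖ :=
      (Measure.ae_ne _ x).mono fun y hy => norm_pos_iff.2 (sub_ne_zero.2 hy.symm)
    have hrD : ∀ᵐ y ∂volume.restrict Ω, ‖x - y‖ ≤ diam Ω :=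
      (ae_restrict_mem hΩm).mono fun y hy => by
        simpa [dist_eq_norm] using dist_le_diam_of_mem hΩb hxΩ hy
    have hjensen := exp_mul_integral_log_inv_le_integral_rpow_neg hc0 (by fun_prop) hr0 hrD
      (ae_of_all _ fun y => by positivity) hw hw1 hx
    have hpotential : Λ * (1 / (2 * π * d) * ∫ y in Ω, log (1 / ‖x - y‖) * |u y|) =
        c * ∫ y in Ω, log (1 / ‖x - y‖) * w y := by
      simp only [w, c, mul_div_assoc', integral_div]
      field_simp
    calc exp (Λ * v x)
        ≤ exp (Λ * (1 / (2 * π * d) * ∫ y in Ω, log (1 / ‖x - y‖) * |u y|) + Λ * K * m) := by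
          gcongr
          linarith [mul_le_mul_of_nonneg_left (hv x hxΩ) hΛ.le]
      _ ≤ exp (Λ * K * m) * ∫ y in Ω, ‖x - y‖ ^ (-c) * w y := by
          rw [hpotential, exp_add, mul_comm]
          gcongr
  calc ∫ x in Ω, exp (Λ * v x)
      ≤ ∫ x in Ω, exp (Λ * K * m) * ∫ y in Ω, ‖x - y‖ ^ (-c) * w y :=
        integral_mono_of_nonneg (ae_of_all _ fun _ => (exp_pos _).le)
          (hF.integral_prod_left.const_mul _) hpointwise
    _ = _ := by
        rw [integral_const_mul, integral_integral_swap hF]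
        simp_rw [integral_mul_const]
        rfl

theorem exp_integral_bound
    (Ω : Set (EuclideanSpace ℝ (Fin 2))) (hΩb : Bornology.IsBounded Ω)
    (hΩm : MeasurableSet Ω)
    (u v : EuclideanSpace ℝ (Fin 2) → ℝ)
    (m d K Λ : ℝ) (hm : 0 < m) (hd : 0 < d) (hK : 0 < K)
    (hu : MeasureTheory.IntegrableOn u Ω)
    (hum : ∫ y in Ω, |u y| = m)
    (hv : ∀ x ∈ Ω, v x ≤
      (1 / (2 * Real.pi * d)) * (∫ y in Ω, Real.log (1 / ‖x - y‖) * |u y|) + K * m)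
    (hΛ : 0 < Λ) (hΛ2 : Λ < 4 * Real.pi * d / m) :
    ∫ x in Ω, Real.exp (Λ * v x) ≤
      Real.exp (Λ * K * m) *
        ∫ y in Ω, (∫ x in Ω, ‖x - y‖ ^ (-(Λ * m / (2 * Real.pi * d)))) * (|u y| / m) :=
  exp_integral_bound_general Ω hΩb hΩm u v m d K Λ hm hd hu hum hv hΛ hΛ2
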